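/- arXiv:1503.08451 — 2 statements merged into one kernel-verified Lean document; each statement's English description precedes it below -/
import Mathlib

section
/- Let S be a nonempty strong-inductive cubical set in the n-dimensional cube B_n. Then the cohomology of the dual cochain complex S* satisfies H^0(S) ≅ ℤ/2ℤ and H^i(S) = 0 for all i > 0. -/
/-- A face of the `n`-dimensional cube: a function `Fin n → Fin 3`,
where `0` stands for `0`, `1` stands for `*`, and `2` stands for `1`. -/
abbrev Face (n : ℕ) := Fin n → Fin 3

/-- The dimension of a face: the number of indices mapped to `*` (encoded as `1 : Fin 3`). -/
def fdim {n : ℕ} (f : Face n) : ℕ := (Finset.univ.filter fun i => f i = 1).card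

/-- `Adj f g` : the face `g` appears in the boundary `∂ f`, i.e. `g` is obtained from `f`
by replacing a single occurrence of `*` by `0` or by `1`. -/
def Adj {n : ℕ} (f g : Face n) : Prop :=
  ∃ i, f i = 1 ∧ g i ≠ 1 ∧ ∀ j, j ≠ i → g j = f j

instance {n : ℕ} (f g : Face n) : Decidable (Adj f g) := by unfold Adj; infer_instance

/-- A cubical set is inductive if it is downward closed for the pointwise order
induced by `0 < * < 1`. -/
def Inductive {n : ℕ} (S : Finset (Face n)) : Prop :=
  ∀ f ∈ S, ∀ f' : Face n, (∀ i, f' i ≤ f i) → f' ∈ S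

/-- Strong-inductive: inductive, and every maximal face has dimension `0`. -/
def StrongInductive {n : ℕ} (S : Finset (Face n)) : Prop :=
  Inductive S ∧ ∀ f ∈ S, (∀ g ∈ S, (∀ i, f i ≤ g i) → g = f) → fdim f = 0

/-- The degree-`k` part of the chain complex of the cubical set `S` over `ℤ/2ℤ`:
the `ℤ/2ℤ`-vector space with basis the faces of `S` of dimension `k`. -/
abbrev Chain {n : ℕ} (S : Finset (Face n)) (k : ℕ) : Type :=
  {f : Face n // f ∈ S ∧ fdim f = k} → ZMod 2

/-- The boundary map `∂ : Chain S k → Chain S (k-1)`: a basis face is sent to the sum of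
the faces appearing in its boundary. -/
noncomputable def bd {n : ℕ} (S : Finset (Face n)) (k : ℕ) :
    Chain S k →ₗ[ZMod 2] Chain S (k - 1) :=
  Matrix.mulVecLin
    (Matrix.of fun (g : {f : Face n // f ∈ S ∧ fdim f = k - 1})
      (f : {f : Face n // f ∈ S ∧ fdim f = k}) => if Adj f.1 g.1 then (1 : ZMod 2) else 0)

/-- The degree-`k` homology of the chain complex `(S, ∂)`:
`ker ∂_k` modulo (the pullback of) `im ∂_{k+1}`. -/
abbrev CubeHomology {n : ℕ} (S : Finset (Face n)) (k : ℕ) : Type :=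
  LinearMap.ker (bd S k) ⧸
    Submodule.comap (LinearMap.ker (bd S k)).subtype (LinearMap.range (bd S (k + 1)))

/-- The degree-`k` cohomology of the dual cochain complex `S* = Hom(S, ℤ/2ℤ)` with
differential `∂*` dual to `∂`: `ker ((∂_{k+1})*) ⧸ im ((∂_k)*)`. -/
abbrev CubeCohomology {n : ℕ} (S : Finset (Face n)) (k : ℕ) : Type :=
  LinearMap.ker (LinearMap.dualMap (bd S (k + 1))) ⧸
    (Submodule.comap (LinearMap.ker (LinearMap.dualMap (bd S (k + 1)))).subtype
        (LinearMap.range (LinearMap.dualMap (bd S k)))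
      : Submodule (ZMod 2) ↥(LinearMap.ker (LinearMap.dualMap (bd S (k + 1)))))

/-!
The contraction `h` of the cube onto the vertex `0⋯0` sends a face `f` to the sum of the faces
`(0, …, 0, *, f_{i+1}, …, f_n)` over the indices `i` with `f_i = 1` and `f_j ≠ *` for `j < i`.
Over `ℤ/2ℤ` it satisfies `∂h + h∂ = id + ε`, where `ε` sends every vertex to `0⋯0`; this is checked
coordinate by coordinate, by induction on `n`. Since `S` is downward closed, `h` maps `S` to
itself, and since every face of `S` lies below a vertex of `S`, so does `∂`: the identity restricts
to `S`. Dually, every cocycle of positive degree is a coboundary, and a `0`-cocycle `φ` equals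
`φ(0⋯0) • σ`, where the augmentation `σ` (the sum of all vertex coordinates) is a cocycle because
every edge has two endpoints.
-/

open Finset

lemma Fin.cons_eq_zero_iff {n : ℕ} {α : Type*} [Zero α] {x : α} {v : Fin n → α} :
    (Fin.cons x v : Fin (n + 1) → α) = 0 ↔ x = 0 ∧ v = 0 :=
  Matrix.cons_eq_zero_iff

lemma card_filter_eq_and {α : Type*} [Fintype α] [DecidableEq α] (a : α) (P : α → Prop)
    [DecidablePred P] : #{x | x = a ∧ P x} = if P a then 1 else 0 := by
  split_ifs with h <;> simp [filter_and, filter_eq', h]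

lemma card_filter_and_eq {α : Type*} [Fintype α] [DecidableEq α] (a : α) (P : α → Prop)
    [DecidablePred P] : #{x | P x ∧ a = x} = if P a then 1 else 0 := by
  split_ifs with h <;> simp [filter_and, filter_eq, h]

lemma Fintype.sum_subtype_eq_sum_of_ne_zero {ι M : Type*} [Fintype ι] [AddCommMonoid M]
    {p : ι → Prop} [DecidablePred p] (w : ι → M) (hw : ∀ x, w x ≠ 0 → p x) :
    ∑ x : Subtype p, w x = ∑ x, w x := by
  rw [← sum_subtype (univ.filter p) (by simp) w]
  exact sum_filter_of_ne fun x _ h => hw x h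

/-- `g` occurs in `h f`, for the contraction `h` described above (`2 : Fin 3` is the value `1`). -/
def ContrAdj {n : ℕ} (f g : Face n) : Prop :=
  ∃ i, f i = 2 ∧ g i = 1 ∧ (∀ j, j < i → f j ≠ 1 ∧ g j = 0) ∧ ∀ j, i < j → g j = f j

instance {n : ℕ} (f g : Face n) : Decidable (ContrAdj f g) := by unfold ContrAdj; infer_instance

section Faces

variable {n : ℕ}

lemma fdim_eq_zero_iff {f : Face n} : fdim f = 0 ↔ ∀ i, f i ≠ 1 := by
  simp [fdim, filter_eq_empty_iff]

@[simp] lemma fdim_zero : fdim (0 : Face n) = 0 := fdim_eq_zero_iff.2 fun _ => by simp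

lemma fdim_cons (a : Fin 3) (f : Face n) :
    fdim (Fin.cons a f : Face (n + 1)) = (if a = 1 then 1 else 0) + fdim f := by
  rw [fdim, fdim, card_filter, card_filter, Fin.sum_univ_succ]
  simp

lemma fdim_eq_add_one {f g : Face n} (i : Fin n) (hf : f i = 1) (hg : g i ≠ 1)
    (h : ∀ j ≠ i, g j = 1 ↔ f j = 1) : fdim f = fdim g + 1 := by
  have hfilter : univ.filter (fun j => f j = 1) = insert i (univ.filter fun j => g j = 1) := by
    ext j
    by_cases hj : j = i
    · simp [hj, hf]
    · simp [hj, h j hj]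
  rw [fdim, hfilter, card_insert_of_notMem (by simpa using hg), fdim]

lemma Adj.fdim_eq {f g : Face n} (h : Adj f g) : fdim f = fdim g + 1 := by
  obtain ⟨i, hf, hg, heq⟩ := h
  exact fdim_eq_add_one i hf hg fun j hj => by rw [heq j hj]

lemma ContrAdj.fdim_eq {f g : Face n} (h : ContrAdj f g) : fdim g = fdim f + 1 := by
  obtain ⟨i, hf, hg, hlt, hgt⟩ := h
  refine fdim_eq_add_one i hg (by rw [hf]; decide) fun j hj => ?_
  rcases hj.lt_or_gt with hj | hj
  · simp [(hlt j hj).1, (hlt j hj).2]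
  · rw [hgt j hj]

lemma ContrAdj.le {f g : Face n} (h : ContrAdj f g) : g ≤ f := by
  obtain ⟨i, hf, hg, hlt, hgt⟩ := h
  intro j
  rcases lt_trichotomy j i with hj | rfl | hj
  · simp [(hlt j hj).2]
  · rw [hf, hg]; exact (by decide : (1 : Fin 3) ≤ 2)
  · rw [hgt j hj]

lemma not_adj_of_fdim_eq_zero {f : Face n} (h : fdim f = 0) (g : Face n) : ¬ Adj f g :=
  fun ⟨i, hi, _⟩ => fdim_eq_zero_iff.1 h i hi

lemma card_filter_adj (f : Face n) : #{g | Adj f g} = 2 * fdim f := by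
  have himage : univ.filter (fun g => Adj f g) =
      ((univ.filter fun i => f i = 1) ×ˢ ({0, 2} : Finset (Fin 3))).image
        fun p => Function.update f p.1 p.2 := by
    ext g
    simp only [mem_filter, mem_univ, true_and, mem_image, mem_product, mem_insert,
      mem_singleton, Prod.exists]
    constructor
    · rintro ⟨i, hf, hg, heq⟩
      refine ⟨i, g i, ⟨hf, by revert hg; generalize g i = x; decide +revert⟩, ?_⟩
      funext j
      by_cases hj : j = i
      · subst hj; simp
      · simp [hj, heq j hj]
    · rintro ⟨i, x, ⟨hf, hx⟩, rfl⟩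
      refine ⟨i, hf, by rcases hx with rfl | rfl <;> simp, fun j hj => by simp [hj]⟩
  rw [himage, card_image_of_injOn, card_product, mul_comm]
  · rfl
  rintro ⟨i, x⟩ hp ⟨j, y⟩ hq hpq
  simp only [coe_product, Set.mem_prod, mem_coe, mem_filter, mem_univ, true_and, mem_insert,
    mem_singleton] at hp hq
  have hij : i = j := by
    by_contra hij
    have := congrFun hpq i
    simp only [Function.update_self, Function.update_of_ne hij, hp.1] at this
    rcases hp.2 with rfl | rfl <;> exact absurd this (by decide)
  subst hij
  simpa using congrFun hpq i

lemma adj_cons (a b : Fin 3) (f g : Face n) :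
    Adj (Fin.cons a f) (Fin.cons b g) ↔ (a = 1 ∧ b ≠ 1 ∧ g = f) ∨ (b = a ∧ Adj f g) := by
  constructor
  · rintro ⟨i, h1, h2, h3⟩
    induction i using Fin.cases with
    | zero =>
      left
      refine ⟨by simpa using h1, by simpa using h2, funext fun j => ?_⟩
      simpa using h3 j.succ (Fin.succ_ne_zero j)
    | succ i =>
      right
      refine ⟨by simpa using h3 0 (Fin.succ_ne_zero i).symm, i, by simpa using h1,
        by simpa using h2, fun j hj => ?_⟩
      simpa using h3 j.succ (by simpa [Fin.succ_inj] using hj)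
  · rintro (⟨ha, hb, rfl⟩ | ⟨hb, i, h1, h2, h3⟩)
    · refine ⟨0, by simpa using ha, by simpa using hb, fun j hj => ?_⟩
      induction j using Fin.cases with
      | zero => exact absurd rfl hj
      | succ j => simp
    · refine ⟨i.succ, by simpa using h1, by simpa using h2, fun j hj => ?_⟩
      induction j using Fin.cases with
      | zero => simpa using hb
      | succ j => simpa using h3 j (by simpa [Fin.succ_inj] using hj)

lemma contrAdj_cons (a b : Fin 3) (f g : Face n) :
    ContrAdj (Fin.cons a f) (Fin.cons b g) ↔
      (a = 2 ∧ b = 1 ∧ g = f) ∨ (a ≠ 1 ∧ b = 0 ∧ ContrAdj f g) := by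
  constructor
  · rintro ⟨i, h1, h2, h3, h4⟩
    induction i using Fin.cases with
    | zero =>
      left
      refine ⟨by simpa using h1, by simpa using h2, funext fun j => ?_⟩
      simpa using h4 j.succ (Fin.succ_pos j)
    | succ i =>
      right
      have h0 := h3 0 (Fin.succ_pos i)
      refine ⟨by simpa using h0.1, by simpa using h0.2, i, by simpa using h1,
        by simpa using h2, fun j hj => ?_, fun j hj => ?_⟩
      · simpa using h3 j.succ (by simpa [Fin.succ_lt_succ_iff] using hj)
      · simpa using h4 j.succ (by simpa [Fin.succ_lt_succ_iff] using hj)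
  · rintro (⟨ha, hb, rfl⟩ | ⟨ha, hb, i, h1, h2, h3, h4⟩)
    · refine ⟨0, by simpa using ha, by simpa using hb, fun j hj => absurd hj (Fin.not_lt_zero j),
        fun j hj => ?_⟩
      induction j using Fin.cases with
      | zero => exact absurd hj (lt_irrefl _)
      | succ j => simp
    · refine ⟨i.succ, by simpa using h1, by simpa using h2, fun j hj => ?_, fun j hj => ?_⟩
      · induction j using Fin.cases with
        | zero => exact ⟨by simpa using ha, by simpa using hb⟩
        | succ j => simpa using h3 j (by simpa [Fin.succ_lt_succ_iff] using hj)
      · induction j using Fin.cases with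
        | zero => exact absurd hj (by simp)
        | succ j => simpa using h4 j (by simpa [Fin.succ_lt_succ_iff] using hj)

lemma sum_face_succ {M : Type*} [AddCommMonoid M] (F : Face (n + 1) → M) :
    ∑ g : Face (n + 1), F g = ∑ b : Fin 3, ∑ g : Face n, F (Fin.cons b g) := by
  rw [← (Fin.consEquiv fun _ => Fin 3).sum_comp F, Fintype.sum_prod_type]
  rfl

end Faces

namespace StrongInductive

variable {n : ℕ} {S : Finset (Face n)}

lemma zero_mem (hS : StrongInductive S) (hne : S.Nonempty) : (0 : Face n) ∈ S :=
  hne.elim fun f hf => hS.1 f hf 0 fun _ => Fin.zero_le _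

lemma exists_vertex_ge (hS : StrongInductive S) {f : Face n} (hf : f ∈ S) :
    ∃ w ∈ S, f ≤ w ∧ fdim w = 0 := by
  classical
  obtain ⟨w, hw⟩ := (S.filter (f ≤ ·)).exists_maximal ⟨f, mem_filter.2 ⟨hf, le_rfl⟩⟩
  obtain ⟨hwS, hfw⟩ := mem_filter.1 hw.1
  refine ⟨w, hwS, hfw, hS.2 w hwS fun g hg hwg => ?_⟩
  exact le_antisymm (hw.2 (mem_filter.2 ⟨hg, hfw.trans hwg⟩) hwg) hwg

/-- A vertex of `S` above `f` is `1` wherever `f` is `*`, so it lies above the boundary of `f`. -/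
lemma mem_of_adj (hS : StrongInductive S) {f g : Face n} (hf : f ∈ S) (h : Adj f g) : g ∈ S := by
  obtain ⟨w, hw, hfw, hw0⟩ := hS.exists_vertex_ge hf
  obtain ⟨i, hfi, hgi, heq⟩ := h
  refine hS.1 w hw g fun j => ?_
  by_cases hj : j = i
  · subst hj
    have hwj : w j = 2 := by
      have h1 : 1 ≤ w j := hfi ▸ hfw j
      have h2 := fdim_eq_zero_iff.1 hw0 j
      revert h1 h2
      generalize w j = x
      decide +revert
    rw [hwj]; exact Fin.le_last _
  · rw [heq j hj]; exact hfw j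

end StrongInductive

/-- `∂h + h∂ = id + ε` on the full cube, at the coefficient of `f'` in the image of `f`. -/
lemma cube_homotopy (n : ℕ) (f f' : Face n) :
    ((∑ g : Face n, if ContrAdj f g ∧ Adj g f' then (1 : ZMod 2) else 0) +
      ∑ g : Face n, if Adj f g ∧ ContrAdj g f' then (1 : ZMod 2) else 0) =
    (if f' = f then 1 else 0) + (if fdim f = 0 ∧ f' = 0 then 1 else 0) := by
  induction n with
  | zero =>
    obtain rfl := Subsingleton.elim f 0
    obtain rfl := Subsingleton.elim f' 0
    have hcontr : ∀ g : Face 0, ¬ ContrAdj 0 g := fun _ ⟨i, _⟩ => i.elim0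
    have hadj : ∀ g : Face 0, ¬ Adj 0 g := fun _ ⟨i, _⟩ => i.elim0
    simp only [hcontr, hadj, false_and, if_false, sum_const_zero, fdim_zero, and_self, if_true]
    decide
  | succ n ih =>
    rw [← Fin.cons_self_tail f, ← Fin.cons_self_tail f', sum_face_succ, sum_face_succ]
    generalize Fin.tail f = ft, Fin.tail f' = ft', f 0 = a, f' 0 = a'
    simp only [contrAdj_cons, adj_cons, Fin.cons_inj, fdim_cons, Fin.cons_eq_zero_iff]
    have hih := ih ft ft'
    fin_cases a <;> fin_cases a' <;>
      simp [Fin.sum_univ_three, card_filter_eq_and, card_filter_and_eq,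
        CharTwo.add_self_eq_zero] at hih ⊢
    · exact hih
    · linear_combination (norm := (ring_nf; reduce_mod_char)) hih

section Chains

variable {n : ℕ} {S : Finset (Face n)}

abbrev Cell (S : Finset (Face n)) (k : ℕ) : Type := {f : Face n // f ∈ S ∧ fdim f = k}

variable (S) in
noncomputable def contraction (k : ℕ) : Chain S k →ₗ[ZMod 2] Chain S (k + 1) :=
  Matrix.mulVecLin (Matrix.of fun (g : Cell S (k + 1)) (f : Cell S k) =>
    if ContrAdj f.1 g.1 then (1 : ZMod 2) else 0)

/-- `h` and `∂` map faces of `S` to faces of `S`, so `cube_homotopy` restricts to `S`. -/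
lemma chain_homotopy_entry (hS : StrongInductive S) {k : ℕ} (f f' : Cell S k) :
    ((∑ g : Cell S (k + 1),
        (if Adj g.1 f'.1 then (1 : ZMod 2) else 0) * if ContrAdj f.1 g.1 then 1 else 0) +
      ∑ g : Cell S (k - 1),
        (if ContrAdj g.1 f'.1 then (1 : ZMod 2) else 0) * if Adj f.1 g.1 then 1 else 0) =
    (if f' = f then 1 else 0) + if fdim f.1 = 0 ∧ f'.1 = 0 then 1 else 0 := by
  simp only [ite_zero_mul_ite_zero, mul_one, Subtype.ext_iff]
  rw [Fintype.sum_subtype_eq_sum_of_ne_zero (p := fun g => g ∈ S ∧ fdim g = k + 1)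
      (fun g => if Adj g f'.1 ∧ ContrAdj f.1 g then (1 : ZMod 2) else 0),
    Fintype.sum_subtype_eq_sum_of_ne_zero (p := fun g => g ∈ S ∧ fdim g = k - 1)
      (fun g => if ContrAdj g f'.1 ∧ Adj f.1 g then (1 : ZMod 2) else 0)]
  · simpa only [and_comm] using cube_homotopy n f.1 f'.1
  · intro g hg
    have hfg : Adj f.1 g := (ite_ne_right_iff.1 hg).1.2
    exact ⟨hS.mem_of_adj f.2.1 hfg, by have := hfg.fdim_eq; omega⟩
  · intro g hg
    have hfg : ContrAdj f.1 g := (ite_ne_right_iff.1 hg).1.2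
    exact ⟨hS.1 f.1 f.2.1 g hfg.le, by rw [hfg.fdim_eq, f.2.2]⟩

lemma bd_comp_contraction_add_contraction_comp_bd (hS : StrongInductive S) (k : ℕ) :
    (bd S (k + 2) ∘ₗ contraction S (k + 1) : Chain S (k + 1) →ₗ[ZMod 2] Chain S (k + 1)) +
      contraction S k ∘ₗ bd S (k + 1) = LinearMap.id := by
  ext f f'
  simpa [bd, contraction, Matrix.mulVec, dotProduct, Pi.single_apply, f.2.2] using
    chain_homotopy_entry hS f f'

variable (S) in
noncomputable def augmentation : Module.Dual (ZMod 2) (Chain S 0) := ∑ v, LinearMap.proj v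

lemma augmentation_single (v : Cell S 0) : augmentation S (Pi.single v 1) = 1 := by
  simp [augmentation]

lemma bd_one_comp_contraction_zero_add (hS : StrongInductive S) (h0 : (0 : Face n) ∈ S) :
    bd S 1 ∘ₗ contraction S 0 + (augmentation S).smulRight (Pi.single ⟨0, h0, fdim_zero⟩ 1) =
      LinearMap.id := by
  ext f f'
  have hvert : ∀ g : Cell S (0 - 1), ¬ Adj f.1 g.1 := fun g => not_adj_of_fdim_eq_zero f.2.2 g
  have h := chain_homotopy_entry hS f f'
  simp [bd, contraction, augmentation_single, Matrix.mulVec, dotProduct, Pi.single_apply, f.2.2,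
    hvert, Subtype.ext_iff] at h ⊢
  linear_combination (norm := (ring_nf; reduce_mod_char)) h

lemma bd_zero : bd S 0 = 0 := by
  ext f f'
  simp [bd, Matrix.mulVec, dotProduct, Pi.single_apply, not_adj_of_fdim_eq_zero f.2.2]

lemma augmentation_comp_bd_one (hS : StrongInductive S) : augmentation S ∘ₗ bd S 1 = 0 := by
  ext e
  have hsupp (g : Face n) (hg : (if Adj e.1 g then (1 : ZMod 2) else 0) ≠ 0) :
      g ∈ S ∧ fdim g = 0 := by
    have he : Adj e.1 g := (ite_ne_right_iff.1 hg).1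
    exact ⟨hS.mem_of_adj e.2.1 he, by have := he.fdim_eq; rw [e.2.2] at this; omega⟩
  calc augmentation S (bd S 1 (Pi.single e 1))
      = ∑ g : Cell S 0, if Adj e.1 g.1 then (1 : ZMod 2) else 0 := by
        simp [bd, augmentation]
    _ = ((2 * fdim e.1 : ℕ) : ZMod 2) := by
        rw [Fintype.sum_subtype_eq_sum_of_ne_zero _ hsupp, sum_boole, card_filter_adj]
    _ = 0 := by rw [e.2.2]; rfl

end Chains

section Cohomology

variable {R X₀ X₁ X₂ : Type*} [CommRing R] [AddCommGroup X₀] [Module R X₀] [AddCommGroup X₁]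
  [Module R X₁] [AddCommGroup X₂] [Module R X₂]

lemma subsingleton_ker_quotient_range_of_homotopy {δ₀ : X₀ →ₗ[R] X₁} {δ₁ : X₁ →ₗ[R] X₂}
    (k₁ : X₁ →ₗ[R] X₀) (k₂ : X₂ →ₗ[R] X₁) (hk : k₂ ∘ₗ δ₁ + δ₀ ∘ₗ k₁ = LinearMap.id) :
    Subsingleton (LinearMap.ker δ₁ ⧸ (LinearMap.range δ₀).comap (LinearMap.ker δ₁).subtype) := by
  refine Submodule.Quotient.subsingleton_iff.2 (Submodule.eq_top_iff'.2 fun φ => ⟨k₁ φ, ?_⟩)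
  have hφ : δ₁ φ = 0 := φ.2
  simpa [hφ] using LinearMap.congr_fun hk φ

variable {A B : Type*} [AddCommGroup A] [Module R A] [AddCommGroup B] [Module R B]

/-- With `∂ h + σ(·) δ = id`, every cocycle `φ` equals `φ δ • σ`. -/
noncomputable def kerDualMapEquivOfHomotopy {d : B →ₗ[R] A} (h : A →ₗ[R] B)
    (σ : Module.Dual R A) (δ : A) (hσ : σ ∘ₗ d = 0) (hσδ : σ δ = 1)
    (hh : d ∘ₗ h + σ.smulRight δ = LinearMap.id) :
    LinearMap.ker d.dualMap ≃ₗ[R] R where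
  toFun φ := φ.1 δ
  map_add' _ _ := rfl
  map_smul' _ _ := rfl
  invFun r := ⟨r • σ, by
    rw [LinearMap.mem_ker, map_smul, LinearMap.dualMap_apply', hσ, smul_zero]⟩
  left_inv φ := by
    have hφ : φ.1 ∘ₗ d = 0 := φ.2
    ext c
    have hc := congr_arg φ.1 (LinearMap.congr_fun hh c)
    rw [LinearMap.add_apply, map_add, LinearMap.comp_apply, ← LinearMap.comp_apply φ.1, hφ] at hc
    simpa [mul_comm] using hc
  right_inv r := by simp [hσδ]

end Cohomology

section CubeCohomology

variable {n : ℕ} {S : Finset (Face n)}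

noncomputable def cubeCohomologyZeroEquiv (hS : StrongInductive S) (h0 : (0 : Face n) ∈ S) :
    CubeCohomology S 0 ≃ₗ[ZMod 2] ZMod 2 :=
  (Submodule.quotEquivOfEqBot _ <| by
      rw [bd_zero, show LinearMap.dualMap (0 : Chain S 0 →ₗ[ZMod 2] Chain S 0) = 0 by ext; simp,
        LinearMap.range_zero, Submodule.comap_bot, Submodule.ker_subtype]).trans
    (kerDualMapEquivOfHomotopy (contraction S 0) (augmentation S) _ (augmentation_comp_bd_one hS)
      (augmentation_single _) (bd_one_comp_contraction_zero_add hS h0))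

lemma subsingleton_cubeCohomology_succ (hS : StrongInductive S) (j : ℕ) :
    Subsingleton (CubeCohomology S (j + 1)) :=
  subsingleton_ker_quotient_range_of_homotopy (contraction S j).dualMap
    (contraction S (j + 1)).dualMap <| LinearMap.ext fun φ => LinearMap.ext fun c => by
      have hc := LinearMap.congr_fun (bd_comp_contraction_add_contraction_comp_bd hS j) c
      simpa using congr_arg φ hc

end CubeCohomology

/-- For a nonempty strong-inductive cubical set `S ⊆ B_n`, the cohomology of the dual
cochain complex `S*` satisfies `H⁰(S) ≅ ℤ/2ℤ` and `Hⁱ(S) = 0` for `i > 0`. -/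
theorem statement1 (n : ℕ) (S : Finset (Face n)) (hne : S.Nonempty)
    (hS : StrongInductive S) :
    Nonempty (CubeCohomology S 0 ≃ₗ[ZMod 2] ZMod 2) ∧
      ∀ i : ℕ, 0 < i → Subsingleton (CubeCohomology S i) := by
  refine ⟨⟨cubeCohomologyZeroEquiv hS (hS.zero_mem hne)⟩, fun i hi => ?_⟩
  obtain ⟨j, rfl⟩ := Nat.exists_eq_succ_of_ne_zero hi.ne'
  exact subsingleton_cubeCohomology_succ hS j
end

section
/- Let S be a strong-inductive cubical set in B_n, R a unital ring, and (C,d) an S-shaped pre-complex over R. Then there exists a sign assignment δ on S such that every square of the δ-deformation C^δ anticommutes, i.e., for every square s of S the two compositions of the maps d^δ along the two pairs of boundary edges of s are negatives of each other. -/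
/-- Replace every `*` (encoded `1`) of a face by the value `a`.
For an edge `e`, `vset e 0` and `vset e 2` are its two endpoint vertices `e₀` and `e₁`. -/
def vset {n : ℕ} (f : Face n) (a : Fin 3) : Face n := fun l => if f l = 1 then a else f l

/-- `corner0 s i a` : replace every `*` of `s` by `0`, then set coordinate `i` to `a`. -/
def corner0 {n : ℕ} (s : Face n) (i : Fin n) (a : Fin 3) : Face n :=
  Function.update (vset s 0) i a

/-- `corner2 s i a` : replace every `*` of `s` by `1` (encoded `2`), then set coordinate
`i` to `a`. -/
def corner2 {n : ℕ} (s : Face n) (i : Fin n) (a : Fin 3) : Face n :=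
  Function.update (vset s 2) i a

/-- An `S`-shaped space over a unital ring `R`: an `R`-module `C v` for each vertex `v`,
and a linear map `d u w : C u → C w` for each pair of vertices. Only the values of `d` on
the pairs `(e₀, e₁)` coming from edges `e` of `S` are relevant. -/
structure SShape (R : Type*) [Ring R] (n : ℕ) where
  C : Face n → Type*
  [acg : ∀ f, AddCommGroup (C f)]
  [mod : ∀ f, Module R (C f)]
  d : ∀ u w : Face n, C u →ₗ[R] C w

attribute [instance] SShape.acg SShape.mod

/-- Multiply a linear map by the sign `(−1)^a` for `a : ℤ/2ℤ`. -/
def signed {R : Type*} [Ring R] (a : ZMod 2) {M N : Type*} [AddCommGroup M] [AddCommGroup N]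
    [Module R M] [Module R N] (f : M →ₗ[R] N) : M →ₗ[R] N :=
  if a = 0 then f else -f

/-- For a square `s` with `*` at the positions `i` and `j`, the composition
`C_{s[i→0,j→0]} → C_{s[i→1,j→0]} → C_{s[i→1,j→1]}` going first along direction `i`. -/
def sqComp {R : Type*} [Ring R] {n : ℕ} (X : SShape R n) (s : Face n) (i : Fin n) :
    X.C (vset s 0) →ₗ[R] X.C (vset s 2) :=
  (X.d (corner0 s i 2) (vset s 2)).comp (X.d (vset s 0) (corner0 s i 2))

/-- The same composition for the `δ`-deformation `C^δ`: each leg is multiplied by the sign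
`(−1)^{δ(e)}` of the corresponding boundary edge `e` of the square `s` (the edge of the
first leg is `corner0 s i 1`, the edge of the second leg is `corner2 s j 1`). -/
def sqCompSigned {R : Type*} [Ring R] {n : ℕ} (X : SShape R n) (δ : Face n → ZMod 2)
    (s : Face n) (i j : Fin n) : X.C (vset s 0) →ₗ[R] X.C (vset s 2) :=
  (signed (δ (corner2 s j 1)) (X.d (corner0 s i 2) (vset s 2))).comp
    (signed (δ (corner0 s i 1)) (X.d (vset s 0) (corner0 s i 2)))

/-- `(u, w)` is the pair of endpoints of an edge of `S`. -/
def EdgePair {n : ℕ} (S : Finset (Face n)) (u w : Face n) : Prop :=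
  ∃ e ∈ S, fdim e = 1 ∧ vset e 0 = u ∧ vset e 2 = w

/-- An `S`-shaped space is an `S`-shaped pre-complex if every square of `S` commutes or
anticommutes, and twice any composition of three maps `d` along composable edges of `S`
is nonzero. -/
def IsPreComplex {R : Type*} [Ring R] {n : ℕ} (S : Finset (Face n)) (X : SShape R n) :
    Prop :=
  (∀ s ∈ S, fdim s = 2 → ∀ i j : Fin n, i ≠ j → s i = 1 → s j = 1 →
      sqComp X s i = sqComp X s j ∨ sqComp X s i = -sqComp X s j) ∧
  (∀ u₀ u₁ u₂ u₃ : Face n, EdgePair S u₀ u₁ → EdgePair S u₁ u₂ → EdgePair S u₂ u₃ →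
      (2 : ℕ) • ((X.d u₂ u₃).comp ((X.d u₁ u₂).comp (X.d u₀ u₁))) ≠ 0)



/-!
Write `ε(s) ∈ ℤ/2` for `0` if the square `s` anticommutes and `1` if it commutes; we need a
1-cochain `δ` with `δ(∂s) = ε(s)`. Going once around the six faces of a cube of `S` carries the
three-step composite `d ∘ d ∘ d` along one monotone path back to itself multiplied by
`(-1)^{Σ ε}`; since twice that composite is nonzero, `ε` is a cocycle. Strong inductivity keeps the
upper faces of a cube in `S`. The cocycle is then a coboundary by a cone construction: `δ(e)` sums
`ε` over the squares obtained from `e` by zeroing the coordinates left of a `1` at position `p`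
(preceding every `*`) and turning that `1` into `*`. For a square `s`, the cocycle condition on the
analogous cubes of `s` makes `δ(∂s)` telescope to `ε(s)`.
-/

open Finset Function

section Faces

variable {n : ℕ}

lemma fdim_update_add_one {f : Face n} {x : Fin n} {a : Fin 3} (hx : f x = 1) (ha : a ≠ 1) :
    fdim (update f x a) + 1 = fdim f := by
  have hstars : univ.filter (fun q => update f x a q = 1) =
      (univ.filter fun q => f q = 1).erase x := by
    ext q
    by_cases hq : q = x <;> simp [hq, ha, update_apply]
  rw [fdim, fdim, hstars, card_erase_add_one (by simpa using hx)]

lemma fdim_eq_card {f : Face n} {T : Finset (Fin n)} (h : ∀ q, f q = 1 ↔ q ∈ T) :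
    fdim f = T.card := by
  rw [fdim]
  congr 1
  ext q
  simp [h]

lemma eq_one_iff_mem_of_fdim_le {f : Face n} {T : Finset (Fin n)} (hle : fdim f ≤ T.card)
    (hT : ∀ q ∈ T, f q = 1) (q : Fin n) : f q = 1 ↔ q ∈ T := by
  have hsub : T ⊆ univ.filter fun q => f q = 1 := fun q hq => by simpa using hT q hq
  rw [eq_of_subset_of_card_le hsub hle]
  simp

lemma eq_one_iff_of_fdim_eq_two {f : Face n} {i j : Fin n} (h2 : fdim f = 2) (hij : i ≠ j)
    (hi : f i = 1) (hj : f j = 1) (q : Fin n) : f q = 1 ↔ q = i ∨ q = j := by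
  have := eq_one_iff_mem_of_fdim_le (T := {i, j}) (by rw [card_pair hij, h2])
    (by simp [hi, hj]) q
  simpa using this

lemma update_eq_one_iff_of_pair {s : Face n} {i j : Fin n} (hij : i ≠ j)
    (hstar : ∀ q, s q = 1 ↔ q = i ∨ q = j) {a : Fin 3} (ha : a ≠ 1) (q : Fin n) :
    update s i a q = 1 ↔ q = j := by
  by_cases hq : q = i
  · subst hq; simp [ha, hij]
  · simp [hq, hstar]

lemma update_vset_eq_update {s : Face n} {i j : Fin n} (hij : i ≠ j)
    (hstar : ∀ q, s q = 1 ↔ q = i ∨ q = j) (a : Fin 3) : update (vset s a) i 1 = update s j a := by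
  funext q
  by_cases hqi : q = i
  · subst hqi; simp [hij, (hstar q).2 (Or.inl rfl)]
  · by_cases hqj : q = j
    · subst hqj; simp [hqi, vset, hstar]
    · simp [hqi, hqj, vset, hstar]

lemma Inductive.update_zero_mem {S : Finset (Face n)} (hS : Inductive S) {f : Face n}
    (hf : f ∈ S) (x : Fin n) : update f x 0 ∈ S := by
  refine hS f hf _ fun q => ?_
  by_cases hq : q = x
  · subst hq; simp
  · simp [hq]

lemma StrongInductive.update_two_mem {S : Finset (Face n)} (hS : StrongInductive S)
    {f : Face n} (hf : f ∈ S) {x : Fin n} (hx : f x = 1) : update f x 2 ∈ S := by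
  obtain ⟨g, hfg, hg⟩ := S.exists_le_maximal hf
  have hg0 : fdim g = 0 := hS.2 g hg.1 fun h hh hgh => (hg.eq_of_le hh hgh).symm
  have hgx : g x ≠ 1 := fun h => by
    simpa using (eq_one_iff_mem_of_fdim_le (T := ∅) hg0.le (by simp) x).1 h
  have hgx2 : g x = 2 := by
    have : (1 : Fin 3) ≤ g x := hx ▸ hfg x
    omega
  refine hS.1 g hg.1 _ fun q => ?_
  by_cases hq : q = x
  · subst hq; simp [hgx2]
  · simpa [hq] using hfg q

end Faces

lemma ZMod.two_eq_zero_or_one (a : ZMod 2) : a = 0 ∨ a = 1 := by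
  revert a; decide

section Signs

variable {R : Type*} [Ring R] {M N P : Type*} [AddCommGroup M] [AddCommGroup N]
  [AddCommGroup P] [Module R M] [Module R N] [Module R P]

@[simp]
lemma signed_zero (f : M →ₗ[R] N) : signed 0 f = f := if_pos rfl

@[simp]
lemma signed_one (f : M →ₗ[R] N) : signed 1 f = -f := if_neg (by decide)

lemma signed_signed (a b : ZMod 2) (f : M →ₗ[R] N) : signed a (signed b f) = signed (a + b) f := by
  rcases ZMod.two_eq_zero_or_one a with rfl | rfl <;>
    rcases ZMod.two_eq_zero_or_one b with rfl | rfl <;> simp [CharTwo.add_self_eq_zero]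

lemma neg_signed (a : ZMod 2) (f : M →ₗ[R] N) : -signed a f = signed (a + 1) f := by
  rcases ZMod.two_eq_zero_or_one a with rfl | rfl <;> simp [CharTwo.add_self_eq_zero]

lemma signed_comp (a : ZMod 2) (f : N →ₗ[R] P) (g : M →ₗ[R] N) :
    (signed a f).comp g = signed a (f.comp g) := by
  rcases ZMod.two_eq_zero_or_one a with rfl | rfl <;> simp

lemma comp_signed (a : ZMod 2) (f : N →ₗ[R] P) (g : M →ₗ[R] N) :
    f.comp (signed a g) = signed a (f.comp g) := by
  rcases ZMod.two_eq_zero_or_one a with rfl | rfl <;> simp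

lemma eq_zero_of_eq_signed {a : ZMod 2} {f : M →ₗ[R] N} (h : f = signed a f)
    (h2 : (2 : ℕ) • f ≠ 0) : a = 0 := by
  rcases ZMod.two_eq_zero_or_one a with rfl | rfl
  · rfl
  · refine absurd ?_ h2
    rw [signed_one] at h
    rw [two_smul]
    nth_rewrite 1 [h]
    exact neg_add_cancel f

end Signs

lemma signed_hexagon {R : Type*} [Ring R] {M₀ Mx My Mz Mxy Mxz Myz M₁ : Type*}
    [AddCommGroup M₀] [AddCommGroup Mx] [AddCommGroup My] [AddCommGroup Mz] [AddCommGroup Mxy]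
    [AddCommGroup Mxz] [AddCommGroup Myz] [AddCommGroup M₁] [Module R M₀] [Module R Mx]
    [Module R My] [Module R Mz] [Module R Mxy] [Module R Mxz] [Module R Myz] [Module R M₁]
    {fx : M₀ →ₗ[R] Mx} {fy : M₀ →ₗ[R] My} {fz : M₀ →ₗ[R] Mz}
    {fxy : Mx →ₗ[R] Mxy} {fxz : Mx →ₗ[R] Mxz} {fyx : My →ₗ[R] Mxy} {fyz : My →ₗ[R] Myz}
    {fzx : Mz →ₗ[R] Mxz} {fzy : Mz →ₗ[R] Myz}
    {gxy : Mxy →ₗ[R] M₁} {gxz : Mxz →ₗ[R] M₁} {gyz : Myz →ₗ[R] M₁}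
    {a₁ a₂ a₃ a₄ a₅ a₆ : ZMod 2}
    (h₁ : fxy.comp fx = signed a₁ (fyx.comp fy)) (h₂ : gxy.comp fyx = signed a₂ (gyz.comp fyz))
    (h₃ : fyz.comp fy = signed a₃ (fzy.comp fz)) (h₄ : gyz.comp fzy = signed a₄ (gxz.comp fzx))
    (h₅ : fzx.comp fz = signed a₅ (fxz.comp fx)) (h₆ : gxz.comp fxz = signed a₆ (gxy.comp fxy)) :
    gxy.comp (fxy.comp fx) = signed (a₁ + a₂ + a₃ + a₄ + a₅ + a₆) (gxy.comp (fxy.comp fx)) := by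
  conv_lhs =>
    rw [h₁, comp_signed, ← LinearMap.comp_assoc, h₂, signed_comp, signed_signed,
      LinearMap.comp_assoc, h₃, comp_signed, signed_signed, ← LinearMap.comp_assoc, h₄,
      signed_comp, signed_signed, LinearMap.comp_assoc, h₅, comp_signed, signed_signed,
      ← LinearMap.comp_assoc, h₆, signed_comp, signed_signed, LinearMap.comp_assoc]

section Cocycle

variable {R : Type*} [Ring R] {n : ℕ}

open Classical in
noncomputable def sqSign (X : SShape R n) (s : Face n) : ZMod 2 :=
  if ∃ i j : Fin n, i ≠ j ∧ s i = 1 ∧ s j = 1 ∧ sqComp X s i = -sqComp X s j then 0 else 1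

lemma sqComp_eq_signed_sqSign {S : Finset (Face n)} {X : SShape R n} (hX : IsPreComplex S X)
    {t : Face n} (ht : t ∈ S) (h2 : fdim t = 2) {x y : Fin n} (hxy : x ≠ y) (hx : t x = 1)
    (hy : t y = 1) : sqComp X t x = signed (sqSign X t + 1) (sqComp X t y) := by
  have hstar := eq_one_iff_of_fdim_eq_two h2 hxy hx hy
  unfold sqSign
  split_ifs with hanti
  · obtain ⟨i, j, hij, hi, hj, hD⟩ := hanti
    rw [zero_add, signed_one]
    rcases (hstar i).1 hi with rfl | rfl <;> rcases (hstar j).1 hj with rfl | rfl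
    · exact absurd rfl hij
    · exact hD
    · rw [hD, neg_neg]
    · exact absurd rfl hij
  · rw [CharTwo.add_self_eq_zero, signed_zero]
    exact (hX.1 t ht h2 x y hxy hx hy).resolve_right fun h => hanti ⟨x, y, hxy, hx, hy, h⟩

lemma d_comp_d_eq_signed_sqSign {S : Finset (Face n)} {X : SShape R n} (hX : IsPreComplex S X)
    {t : Face n} (ht : t ∈ S) (h2 : fdim t = 2) {x y : Fin n} (hxy : x ≠ y) (hx : t x = 1)
    (hy : t y = 1) {v vx vy w : Face n} (hv : vset t 0 = v) (hvx : update v x 2 = vx)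
    (hvy : update v y 2 = vy) (hw : vset t 2 = w) :
    (X.d vx w).comp (X.d v vx) = signed (sqSign X t + 1) ((X.d vy w).comp (X.d v vy)) := by
  subst hv hvx hvy hw
  exact sqComp_eq_signed_sqSign hX ht h2 hxy hx hy

lemma sqSign_cocycle {S : Finset (Face n)} {X : SShape R n} (hS : StrongInductive S)
    (hX : IsPreComplex S X) {c : Face n} (hc : c ∈ S) {x y z : Fin n} (hxy : x ≠ y)
    (hxz : x ≠ z) (hyz : y ≠ z) (hstar : ∀ q, c q = 1 ↔ q = x ∨ q = y ∨ q = z) :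
    sqSign X (update c x 0) + sqSign X (update c x 2) + sqSign X (update c y 0)
      + sqSign X (update c y 2) + sqSign X (update c z 0) + sqSign X (update c z 2) = 0 := by
  have hx : c x = 1 := by simp [hstar]
  have hy : c y = 1 := by simp [hstar]
  have hz : c z = 1 := by simp [hstar]
  have h3 : fdim c = 3 := by
    rw [fdim_eq_card (T := {x, y, z}) (by simpa using hstar), card_eq_three]
    exact ⟨x, y, z, hxy, hxz, hyz, rfl⟩
  have hfdim : ∀ {w : Fin n} {a : Fin 3}, c w = 1 → a ≠ 1 → fdim (update c w a) = 2 :=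
    fun hw ha => by have := fdim_update_add_one hw ha; omega
  have hedge : ∀ {w w' : Fin n} {a b : Fin 3}, w ≠ w' → c w = 1 → c w' = 1 → a ≠ 1 → b ≠ 1 →
      fdim (update (update c w a) w' b) = 1 := by
    intro w w' a b hww' hw hw' ha hb
    have := fdim_update_add_one (f := update c w a) (x := w') (by simp [hww'.symm, hw']) hb
    have := fdim_update_add_one hw ha
    omega
  have h0 : ∀ w, update c w 0 ∈ S := hS.1.update_zero_mem hc
  have h2 : ∀ {w}, c w = 1 → update c w 2 ∈ S := fun hw => hS.update_two_mem hc hw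
  -- the six faces of `c`, read as relations between monotone paths from `vset c 0` to `vset c 2`
  have hex := signed_hexagon
    (d_comp_d_eq_signed_sqSign hX (h0 z) (hfdim hz (by decide)) hxy
      (by simp [hxz, hx]) (by simp [hyz, hy]) (v := vset c 0) ?_ rfl rfl ?_)
    (d_comp_d_eq_signed_sqSign hX (h2 hy) (hfdim hy (by decide)) hxz
      (by simp [hxy, hx]) (by simp [hyz.symm, hz]) ?_ ?_ rfl ?_)
    (d_comp_d_eq_signed_sqSign hX (h0 x) (hfdim hx (by decide)) hyz
      (by simp [hxy.symm, hy]) (by simp [hxz.symm, hz]) ?_ rfl rfl ?_)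
    (d_comp_d_eq_signed_sqSign hX (h2 hz) (hfdim hz (by decide)) hxy.symm
      (by simp [hyz, hy]) (by simp [hxz, hx]) ?_ ?_ ?_ ?_)
    (d_comp_d_eq_signed_sqSign hX (h0 y) (hfdim hy (by decide)) hxz.symm
      (by simp [hyz.symm, hz]) (by simp [hxy, hx]) ?_ rfl rfl ?_)
    (d_comp_d_eq_signed_sqSign hX (h2 hx) (hfdim hx (by decide)) hyz.symm
      (by simp [hxz.symm, hz]) (by simp [hxy.symm, hy]) (w := vset c 2) ?_ rfl rfl ?_)
  have hsum := eq_zero_of_eq_signed hex (hX.2 _ _ _ _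
    ⟨update (update c y 0) z 0, hS.1.update_zero_mem (h0 y) z,
      hedge hyz hy hz (by decide) (by decide), ?_, ?_⟩
    ⟨update (update c x 2) z 0, hS.1.update_zero_mem (h2 hx) z,
      hedge hxz hx hz (by decide) (by decide), ?_, ?_⟩
    ⟨update (update c x 2) y 2, hS.update_two_mem (h2 hx) (by simp [hxy.symm, hy]),
      hedge hxy hx hy (by decide) (by decide), ?_, ?_⟩)
  · grind
  all_goals
    funext q
    by_cases hqx : q = x <;> by_cases hqy : q = y <;> by_cases hqz : q = z <;>
      simp [vset, hstar, hqx, hqy, hqz, hxy, hxz, hyz, hxy.symm, hxz.symm, hyz.symm]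

end Cocycle

section Cone

variable {n : ℕ}

def zeroBelow (s : Face n) (t : ℕ) : Face n := fun q => if (q : ℕ) < t then 0 else s q

def coneFace (e : Face n) (p : Fin n) : Face n := update (zeroBelow e p) p 1

variable {s : Face n} {p q : Fin n} {a : Fin 3}

@[simp]
lemma zeroBelow_zero (s : Face n) : zeroBelow s 0 = s := rfl

lemma zeroBelow_succ (h : s p = 0) : zeroBelow s (p + 1) = zeroBelow s p := by
  funext r
  by_cases hr : r = p
  · subst hr; simp [zeroBelow, h]
  · simp only [zeroBelow]
    split_ifs <;> first | rfl | omega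

lemma update_coneFace_zero : update (coneFace s p) p 0 = zeroBelow s (p + 1) := by
  funext r
  simp only [coneFace, zeroBelow, update_apply]
  split_ifs <;> first | rfl | omega

lemma update_coneFace_two (h : s p = 2) : update (coneFace s p) p 2 = zeroBelow s p := by
  funext r
  simp only [coneFace, zeroBelow, update_apply]
  split_ifs with hr <;> first | rfl | omega | (subst hr; exact h.symm)

lemma coneFace_update_of_lt (h : p < q) :
    coneFace (update s q a) p = update (coneFace s p) q a := by
  funext r
  simp only [coneFace, zeroBelow, update_apply]
  split_ifs <;> first | rfl | omega

lemma coneFace_update_of_gt (h : q < p) : coneFace (update s q a) p = coneFace s p := by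
  funext r
  simp only [coneFace, zeroBelow, update_apply]
  split_ifs <;> first | rfl | omega

lemma coneFace_update_self (h : s p = 1) : coneFace (update s p a) p = zeroBelow s p := by
  funext r
  simp only [coneFace, zeroBelow, update_apply]
  split_ifs with hr <;> first | rfl | omega | (subst hr; exact h.symm)

lemma coneFace_le (h : s p = 2) : coneFace s p ≤ s := by
  intro r
  simp only [coneFace, zeroBelow, update_apply]
  split_ifs with hr
  · subst hr; simp [h]
  · exact Fin.zero_le _
  · exact le_rfl

lemma coneFace_eq_one_iff : coneFace s p q = 1 ↔ q = p ∨ p < q ∧ s q = 1 := by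
  simp only [coneFace, zeroBelow, update_apply]
  split_ifs <;> simp_all <;> omega

end Cone

lemma Fin.sum_ite_lt_sub {G : Type*} [AddCommGroup G] (g : ℕ → G) {m n : ℕ} (hm : m ≤ n) :
    ∑ p : Fin n, (if (p : ℕ) < m then g (p + 1) - g p else 0) = g m - g 0 := by
  rw [Fin.sum_univ_eq_sum_range (fun p => if p < m then g (p + 1) - g p else 0), ← sum_filter,
    show (range n).filter (· < m) = range m by ext; simp; omega, sum_range_sub]

section SignAssignment

variable {R : Type*} [Ring R] {n : ℕ}

noncomputable def signAssignment (X : SShape R n) (e : Face n) : ZMod 2 :=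
  ∑ p ∈ univ.filter (fun p => e p = 2 ∧ ∀ q < p, e q ≠ 1), sqSign X (coneFace e p)

lemma signAssignment_eq_sum (X : SShape R n) {e : Face n} {k : Fin n}
    (hk : ∀ q, e q = 1 ↔ q = k) :
    signAssignment X e = ∑ p, if p < k ∧ e p = 2 then sqSign X (coneFace e p) else 0 := by
  rw [signAssignment, sum_filter]
  refine sum_congr rfl fun p _ => if_congr ⟨fun ⟨hp, hbelow⟩ => ⟨?_, hp⟩,
    fun ⟨hpk, hp⟩ => ⟨hp, fun q hqp hq => (hqp.trans hpk).ne ((hk q).1 hq)⟩⟩ rfl rfl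
  rcases lt_trichotomy p k with hpk | rfl | hkp
  · exact hpk
  · simp [(hk p).2 rfl] at hp
  · exact absurd ((hk k).2 rfl) (hbelow k hkp)

variable {S : Finset (Face n)} {X : SShape R n} {s : Face n} {i j : Fin n}

lemma sqSign_coneFace_cocycle (hS : StrongInductive S) (hX : IsPreComplex S X) (hs : s ∈ S)
    {p : Fin n} (hpi : p < i) (hij : i < j) (hstar : ∀ q, s q = 1 ↔ q = i ∨ q = j)
    (hp : s p = 2) :
    sqSign X (coneFace (update s i 0) p) + sqSign X (coneFace (update s i 2) p)
      + sqSign X (coneFace (update s j 0) p) + sqSign X (coneFace (update s j 2) p)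
      = sqSign X (zeroBelow s (p + 1)) - sqSign X (zeroBelow s p) := by
  have hcube := sqSign_cocycle hS hX (hS.1 s hs _ (coneFace_le hp)) hpi.ne (hpi.trans hij).ne
    hij.ne fun q => by rw [coneFace_eq_one_iff, hstar]; omega
  rw [update_coneFace_zero, update_coneFace_two hp] at hcube
  rw [coneFace_update_of_lt hpi, coneFace_update_of_lt hpi, coneFace_update_of_lt (hpi.trans hij),
    coneFace_update_of_lt (hpi.trans hij)]
  grind

lemma signAssignment_boundary_term (hS : StrongInductive S) (hX : IsPreComplex S X) (hs : s ∈ S)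
    (hij : i < j) (hstar : ∀ q, s q = 1 ↔ q = i ∨ q = j) (p : Fin n) :
    ((if p < j ∧ update s i 0 p = 2 then sqSign X (coneFace (update s i 0) p) else 0)
      + (if p < j ∧ update s i 2 p = 2 then sqSign X (coneFace (update s i 2) p) else 0)
      + (if p < i ∧ update s j 0 p = 2 then sqSign X (coneFace (update s j 0) p) else 0)
      + (if p < i ∧ update s j 2 p = 2 then sqSign X (coneFace (update s j 2) p) else 0))
      = (if (p : ℕ) < i then sqSign X (zeroBelow s (p + 1)) - sqSign X (zeroBelow s p) else 0)
        + (if p = i then sqSign X (zeroBelow s i) else 0) := by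
  rcases lt_trichotomy p i with hpi | rfl | hip
  · have hpj := hpi.trans hij
    simp only [update_of_ne hpi.ne, update_of_ne hpj.ne, hpi, hpj, true_and, Fin.lt_def.1 hpi,
      if_true, hpi.ne, if_false, add_zero]
    by_cases hp : s p = 2
    · simp only [hp, if_true]
      exact sqSign_coneFace_cocycle hS hX hs hpi hij hstar hp
    · have hp0 : s p = 0 := by
        have : s p ≠ 1 := fun h => by rcases (hstar p).1 h with rfl | rfl <;> simp at hpi hpj
        omega
      simp [hp, zeroBelow_succ hp0]
  · simp [hij, coneFace_update_self ((hstar p).2 (Or.inl rfl))]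
  · simp only [update_of_ne hip.ne', coneFace_update_of_gt hip, hip.not_gt, hip.ne', false_and,
      if_false, add_zero, Fin.lt_def.not.1 hip.not_gt]
    exact CharTwo.add_self_eq_zero _

lemma signAssignment_boundary_of_lt (hS : StrongInductive S) (hX : IsPreComplex S X)
    (hs : s ∈ S) (hij : i < j) (hstar : ∀ q, s q = 1 ↔ q = i ∨ q = j) :
    signAssignment X (update s i 0) + signAssignment X (update s i 2)
      + signAssignment X (update s j 0) + signAssignment X (update s j 2) = sqSign X s := by
  have hstar' : ∀ q, s q = 1 ↔ q = j ∨ q = i := fun q => (hstar q).trans or_comm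
  rw [signAssignment_eq_sum X (update_eq_one_iff_of_pair hij.ne hstar (a := 0) (by decide)),
    signAssignment_eq_sum X (update_eq_one_iff_of_pair hij.ne hstar (a := 2) (by decide)),
    signAssignment_eq_sum X (update_eq_one_iff_of_pair hij.ne' hstar' (a := 0) (by decide)),
    signAssignment_eq_sum X (update_eq_one_iff_of_pair hij.ne' hstar' (a := 2) (by decide)),
    ← sum_add_distrib, ← sum_add_distrib, ← sum_add_distrib,
    sum_congr rfl fun p _ => signAssignment_boundary_term hS hX hs hij hstar p, sum_add_distrib,
    Fin.sum_ite_lt_sub (fun m => sqSign X (zeroBelow s m)) i.isLt.le, sum_ite_eq' univ i,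
    if_pos (mem_univ i), zeroBelow_zero]
  grind

lemma signAssignment_boundary (hS : StrongInductive S) (hX : IsPreComplex S X)
    (hs : s ∈ S) (hij : i ≠ j) (hstar : ∀ q, s q = 1 ↔ q = i ∨ q = j) :
    signAssignment X (update s i 0) + signAssignment X (update s i 2)
      + signAssignment X (update s j 0) + signAssignment X (update s j 2) = sqSign X s := by
  rcases hij.lt_or_gt with hlt | hgt
  · exact signAssignment_boundary_of_lt hS hX hs hlt hstar
  · rw [← signAssignment_boundary_of_lt hS hX hs hgt fun q => (hstar q).trans or_comm]
    abel

end SignAssignment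

lemma sqCompSigned_eq_signed {R : Type*} [Ring R] {n : ℕ} (X : SShape R n)
    (δ : Face n → ZMod 2) {s : Face n} {i j : Fin n} (hij : i ≠ j)
    (hstar : ∀ q, s q = 1 ↔ q = i ∨ q = j) :
    sqCompSigned X δ s i j = signed (δ (update s i 2) + δ (update s j 0)) (sqComp X s i) := by
  have h0 : corner0 s i 1 = update s j 0 := update_vset_eq_update hij hstar 0
  have h2 : corner2 s j 1 = update s i 2 :=
    update_vset_eq_update hij.symm (fun q => (hstar q).trans or_comm) 2
  rw [sqCompSigned, h0, h2, signed_comp, comp_signed, signed_signed]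
  rfl

/-- For a strong-inductive cubical set `S` and an `S`-shaped pre-complex `(C, d)`, there is
a sign assignment `δ` on the edges of `S` such that every square of the `δ`-deformation
`C^δ` anticommutes. -/
theorem statement2 {R : Type*} [Ring R] {n : ℕ} (S : Finset (Face n))
    (hS : StrongInductive S) (X : SShape R n) (hX : IsPreComplex S X) :
    ∃ δ : Face n → ZMod 2, ∀ s ∈ S, fdim s = 2 → ∀ i j : Fin n, i ≠ j → s i = 1 → s j = 1 →
      sqCompSigned X δ s i j = -sqCompSigned X δ s j i := by
  refine ⟨signAssignment X, fun s hs h2 i j hij hi hj => ?_⟩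
  have hstar := eq_one_iff_of_fdim_eq_two h2 hij hi hj
  have hbd := signAssignment_boundary hS hX hs hij hstar
  rw [sqCompSigned_eq_signed X _ hij hstar,
    sqCompSigned_eq_signed X _ hij.symm fun q => (hstar q).trans or_comm,
    sqComp_eq_signed_sqSign hX hs h2 hij hi hj, signed_signed, neg_signed]
  congr 1
  grind
end
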